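/- Let n ≥ 1, let V = {x ∈ ℝ^{n+1} : x₁ + ⋯ + x_{n+1} = 0} with the standard inner product, on which the symmetric group S_{n+1} acts by permuting coordinates (the Weyl group of the root system A_n). Fix 1 ≤ r ≤ n, set s = n + 1 − r, and let a_r = (1/(n+1))(s, …, s, −r, …, −r) ∈ V (r coordinates equal to s/(n+1), followed by s coordinates equal to −r/(n+1)). The stabilizer of a_r in S_{n+1} is the subgroup S_r × S_s permuting the first r and the last s coordinates separately. Then every S_r × S_s-invariant polynomial function on V lies in the ℝ-subalgebra generated by the S_{n+1}-invariant polynomial functions f on V together with their translates v ↦ f(v + a_r). -/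

import Mathlib

/-
Composing with the orthogonal projection onto `V`, which commutes with permutations, an
`S_r × S_s`-invariant polynomial function on `V` is the restriction of an `S_r × S_s`-invariant
polynomial on `ℝ^{n+1}`. Expanding that polynomial in the first block of variables over the ring of
polynomials in the second block, the fundamental theorem of symmetric polynomials gives
coefficients that are symmetric in the second block; with Newton's identities, the polynomial is a
polynomial in the block power sums `q_k = ∑_{i ≤ r} x_i^k` and `q'_k = p_k - q_k`.
Since `a_r` is constant on each block, with values `α ≠ β`, the binomial expansion of
`p_{k+1}(x + a_r) = ∑_i (x_i + a_i)^{k+1}` equals `p_{k+1}(x) + (k+1)((α - β) q_k + β p_k)` plus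
terms in `p_j, q_j` with `j < k`, so by induction every `q_k` lies in the algebra generated by the
power sums and their translates.
-/

open scoped RealInnerProductSpace

/-- The linear functional `x ↦ ∑ i, x i` on `ℝ^m`. -/
noncomputable def coordSum (m : ℕ) : EuclideanSpace ℝ (Fin m) →ₗ[ℝ] ℝ where
  toFun x := ∑ i, x i
  map_add' x y := by simp [Finset.sum_add_distrib]
  map_smul' c x := by simp [Finset.mul_sum]

/-- The hyperplane `V = {x ∈ ℝ^{n+1} : x₁ + ⋯ + x_{n+1} = 0}`. -/
noncomputable def zeroSum (n : ℕ) : Submodule ℝ (EuclideanSpace ℝ (Fin (n + 1))) :=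
  LinearMap.ker (coordSum (n + 1))

/-- The action of a permutation `σ ∈ S_{n+1}` on the zero-sum hyperplane, by permutation
of the coordinates. -/
noncomputable def permAct {n : ℕ} (σ : Equiv.Perm (Fin (n + 1))) (x : zeroSum n) : zeroSum n :=
  ⟨(WithLp.toLp 2 (fun i => (x : EuclideanSpace ℝ (Fin (n + 1))) (σ i)) : EuclideanSpace ℝ (Fin (n + 1))), by
    have hx : ∑ i, (x : EuclideanSpace ℝ (Fin (n + 1))) i = 0 := x.2
    have : ∑ i, (x : EuclideanSpace ℝ (Fin (n + 1))) (σ i)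
        = ∑ i, (x : EuclideanSpace ℝ (Fin (n + 1))) i :=
      Equiv.sum_comp σ _
    show ∑ i, (x : EuclideanSpace ℝ (Fin (n + 1))) (σ i) = 0
    rw [this, hx]⟩

/-- A polynomial function on a real vector space `M`: an element of the `ℝ`-subalgebra of
`M → ℝ` generated by the linear functionals. -/
def IsPolyFun {M : Type*} [AddCommGroup M] [Module ℝ M] (f : M → ℝ) : Prop :=
  f ∈ Algebra.adjoin ℝ {g : M → ℝ | ∃ l : M →ₗ[ℝ] ℝ, g = ⇑l}

open Set Algebra Equiv MvPolynomial

theorem AlgHom.apply_mem_adjoin_image {R A B : Type*} [CommRing R] [CommRing A] [CommRing B]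
    [Algebra R A] [Algebra R B] (f : A →ₐ[R] B) {s : Set A} {x : A} (hx : x ∈ adjoin R s) :
    f x ∈ adjoin R (f '' s) := by
  rw [adjoin_image]
  exact Subalgebra.mem_map.2 ⟨x, hx, rfl⟩

theorem Finset.sum_add_algebraMap_pow {R A T : Type*} [CommRing R] [CommRing A] [Algebra R A]
    (s : Finset T) (x : T → A) (c : R) (k : ℕ) :
    ∑ t ∈ s, (x t + algebraMap R A c) ^ k
      = ∑ j ∈ Finset.range (k + 1), (k.choose j * c ^ (k - j)) • ∑ t ∈ s, x t ^ j := by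
  simp_rw [add_pow, Finset.smul_sum]
  rw [Finset.sum_comm]
  refine Finset.sum_congr rfl fun j _ => Finset.sum_congr rfl fun t _ => ?_
  rw [Algebra.smul_def]
  simp only [map_mul, map_pow, map_natCast]
  ring

namespace MvPolynomial

section Newton

variable (σ : Type*) [Fintype σ] (K : Type*) [Field K] [CharZero K]

theorem esymm_mem_adjoin_range_psum (k : ℕ) :
    esymm σ K k ∈ adjoin K (range (psum σ K)) := by
  induction k using Nat.strong_induction_on with
  | _ k ih =>
    rcases k with _ | k
    · simp
    have hk : ((k + 1 : ℕ) : MvPolynomial σ K) = C ((k : K) + 1) := by simp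
    have h := mul_esymm_eq_sum σ K (k + 1)
    rw [hk, ← smul_eq_C_mul] at h
    rw [← inv_smul_smul₀ (Nat.cast_add_one_ne_zero k : (k : K) + 1 ≠ 0) (esymm σ K (k + 1)), h]
    refine Subalgebra.smul_mem _ (mul_mem (pow_mem (neg_mem (one_mem _)) _)
      (Subalgebra.sum_mem _ fun j hj => ?_)) _
    exact mul_mem (mul_mem (pow_mem (neg_mem (one_mem _)) _)
      (ih j.1 (Finset.mem_filter.mp hj).2)) (subset_adjoin ⟨j.2, rfl⟩)

end Newton

section Symmetric

variable {σ R S : Type*} [Fintype σ] [CommRing R] [CommRing S]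

theorem IsSymmetric.mem_adjoin_range_esymm {p : MvPolynomial σ R} (hp : p.IsSymmetric) :
    p ∈ adjoin R (range (esymm σ R)) := by
  obtain ⟨q, hq⟩ := esymmAlgHom_surjective (σ := σ) R le_rfl ⟨p, hp⟩
  have : p ∈ adjoin R (range fun i : Fin (Fintype.card σ) => esymm σ R (i + 1)) := by
    rw [adjoin_range_eq_range_aeval]
    exact ⟨q, by rw [AlgHom.toRingHom_eq_coe, RingHom.coe_coe, ← esymmAlgHom_apply, hq]⟩
  exact adjoin_mono (range_comp_subset_range _ _) this

theorem map_aeval_esymm (φ : R →+* S) {n : ℕ} (q : MvPolynomial (Fin n) R) :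
    map φ (aeval (fun i : Fin n => esymm σ R (i + 1)) q)
      = aeval (fun i : Fin n => esymm σ S (i + 1)) (map φ q) := by
  rw [map_aeval, aeval_def, eval₂_map, coe_eval₂Hom]
  congr 1
  · ext : 1; simp [algebraMap_eq]
  · simp [map_esymm]

theorem map_eq_self_of_map_aeval_esymm_eq_self (φ : R →+* R)
    {q : MvPolynomial (Fin (Fintype.card σ)) R}
    (h : map φ (aeval (fun i : Fin _ => esymm σ R (i + 1)) q)
      = aeval (fun i : Fin _ => esymm σ R (i + 1)) q) :
    map φ q = q :=
  esymmAlgHom_injective (σ := σ) R le_rfl <| Subtype.ext <| by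
    rw [esymmAlgHom_apply, esymmAlgHom_apply, ← map_aeval_esymm, h]

theorem sumAlgEquiv_rename_sumCongr {A B : Type*} (ea : Perm A) (eb : Perm B)
    (P : MvPolynomial (A ⊕ B) R) :
    sumAlgEquiv R A B (rename (sumCongr ea eb) P)
      = rename ea (mapAlgHom (rename eb) (sumAlgEquiv R A B P)) := by
  have : (sumAlgEquiv R A B).toAlgHom.comp (rename (sumCongr ea eb))
      = ((rename ea).restrictScalars R).comp
          ((mapAlgHom (rename eb)).comp (sumAlgEquiv R A B).toAlgHom) := by
    ext (i | i) : 1 <;> simp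
  exact DFunLike.congr_fun this P

theorem sumAlgEquiv_rename_inl_esymm {A : Type*} [Fintype A] (B : Type*) (k : ℕ) :
    sumAlgEquiv R A B (rename Sum.inl (esymm A R k)) = esymm A (MvPolynomial B R) k := by
  rw [← AlgEquiv.coe_toAlgHom, ← AlgHom.comp_apply, sumAlgEquiv_comp_rename_inl]
  exact map_esymm A _ k _

theorem sumAlgEquiv_toRingHom_comp_rename_inr (A B : Type*) :
    (sumAlgEquiv R A B : MvPolynomial (A ⊕ B) R →+* MvPolynomial A (MvPolynomial B R)).comp
      (rename Sum.inr : MvPolynomial B R →ₐ[R] MvPolynomial (A ⊕ B) R).toRingHom = C := by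
  ext : 2 <;> simp

theorem mem_adjoin_esymm_of_sumCongr_invariant {A B : Type*} [Fintype A] [Fintype B]
    {P : MvPolynomial (A ⊕ B) R}
    (hP : ∀ (ea : Perm A) (eb : Perm B), rename (sumCongr ea eb) P = P) :
    P ∈ adjoin R (range (fun k => rename Sum.inl (esymm A R k))
      ∪ range (fun k => rename Sum.inr (esymm B R k))) := by
  set Φ := sumAlgEquiv R A B
  have hsymm : (Φ P).IsSymmetric := fun ea => by
    simpa [Φ, sumAlgEquiv_rename_sumCongr] using congrArg Φ (hP ea 1)
  obtain ⟨q, hq⟩ := esymmAlgHom_surjective (σ := A) (MvPolynomial B R) le_rfl ⟨Φ P, hsymm⟩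
  replace hq : aeval (fun i : Fin _ => esymm A _ (i + 1)) q = Φ P := by
    rw [← esymmAlgHom_apply, hq]
  -- `q` is unique, and permuting the variables of `B` fixes `Φ P`, hence fixes `q`.
  have hcoeff : ∀ d, (q.coeff d).IsSymmetric := fun d eb => by
    have hmap : map (rename eb : MvPolynomial B R →ₐ[R] _).toRingHom q = q := by
      refine map_eq_self_of_map_aeval_esymm_eq_self _ ?_
      rw [hq]
      simpa [Φ, sumAlgEquiv_rename_sumCongr] using congrArg Φ (hP 1 eb)
    simpa [coeff_map] using congrArg (coeff d) hmap
  have hP : P = eval₂ (rename Sum.inr : MvPolynomial B R →ₐ[R] _).toRingHom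
      (fun i : Fin _ => rename Sum.inl (esymm A R (i + 1))) q := by
    apply Φ.injective
    change _ = (Φ : MvPolynomial (A ⊕ B) R →+* MvPolynomial A (MvPolynomial B R)) _
    rw [← hq, hom_eval₂, sumAlgEquiv_toRingHom_comp_rename_inr, aeval_def, algebraMap_eq]
    simp only [RingHom.coe_coe, Φ, sumAlgEquiv_rename_inl_esymm]
  rw [hP]
  refine eval₂_mem (fun d _ => ?_) fun i => subset_adjoin (Or.inl ⟨_, rfl⟩)
  refine adjoin_mono ?_
    ((rename Sum.inr).apply_mem_adjoin_image (hcoeff d).mem_adjoin_range_esymm)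
  rw [← range_comp]
  exact subset_union_right

end Symmetric

section Blocks

variable {R : Type*} [CommRing R] {ι : Type*} [Fintype ι] (p : ι → Prop) [DecidablePred p]

noncomputable def blockPsum (k : ℕ) : MvPolynomial ι R :=
  ∑ i : {i // p i}, X (i : ι) ^ k

theorem blockPsum_add_blockPsum_not (k : ℕ) :
    blockPsum p k + blockPsum (fun i => ¬p i) k = psum ι R k :=
  Fintype.sum_subtype_add_sum_subtype p fun i => X i ^ k

theorem rename_subtypeVal_psum (k : ℕ) :
    rename Subtype.val (psum {i // p i} R k) = blockPsum p k := by
  simp [psum, blockPsum]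

noncomputable def translate (a : ι → R) : MvPolynomial ι R →ₐ[R] MvPolynomial ι R :=
  aeval fun i => X i + C (a i)

omit [Fintype ι] in
theorem eval_translate (a x : ι → R) (P : MvPolynomial ι R) :
    eval x (translate a P) = eval (x + a) P := by
  rw [translate, aeval_eq_bind₁, eval, eval₂Hom_bind₁]
  congr 2
  funext i
  simp

theorem translate_psum {a : ι → R} {α β : R}
    (hα : ∀ i, p i → a i = α) (hβ : ∀ i, ¬p i → a i = β) (k : ℕ) :
    translate a (psum ι R k) = ∑ j ∈ Finset.range (k + 1),
      (k.choose j * α ^ (k - j)) • blockPsum p j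
        + ∑ j ∈ Finset.range (k + 1),
            (k.choose j * β ^ (k - j)) • blockPsum (fun i => ¬p i) j := by
  rw [← blockPsum_add_blockPsum_not p, map_add]
  simp only [blockPsum, map_sum, map_pow, translate, aeval_X]
  rw [← Finset.sum_add_algebraMap_pow, ← Finset.sum_add_algebraMap_pow, ← algebraMap_eq]
  congr 1 <;> refine Finset.sum_congr rfl fun i _ => ?_
  · rw [hα i i.2]
  · rw [hβ i i.2]

variable {K : Type*} [Field K] [CharZero K]

theorem mem_adjoin_blockPsum_of_invariant {P : MvPolynomial ι K}
    (hP : ∀ σ : Perm ι, (∀ i, p i ↔ p (σ i)) → rename σ P = P) :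
    P ∈ adjoin K (range (blockPsum p) ∪ range (blockPsum fun i => ¬p i)) := by
  set e := sumCompl p
  have hinv : ∀ ea eb, rename (sumCongr ea eb) (rename e.symm P) = rename e.symm P := by
    intro ea eb
    have hσ : ∀ i, p i ↔ p (Perm.subtypeCongr ea eb i) := fun i => by
      by_cases hi : p i
      · rw [Perm.subtypeCongr.left_apply _ _ hi]
        exact iff_of_true hi (ea _).2
      · rw [Perm.subtypeCongr.right_apply _ _ hi]
        exact iff_of_false hi (eb _).2
    conv_rhs => rw [← hP _ hσ]
    simp only [rename_rename]
    congr 2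
    funext i
    simp [Perm.subtypeCongr, e]
  have hP' : P = rename e (rename e.symm P) := by simp [rename_rename]
  rw [hP']
  refine adjoin_le ?_
    ((rename e).apply_mem_adjoin_image (mem_adjoin_esymm_of_sumCongr_invariant hinv))
  rintro _ ⟨_, ⟨k, rfl⟩ | ⟨k, rfl⟩, rfl⟩
  all_goals
    rw [rename_rename]
    refine adjoin_mono ?_
      ((rename _).apply_mem_adjoin_image (esymm_mem_adjoin_range_psum _ K k))
    rintro _ ⟨_, ⟨j, rfl⟩, rfl⟩
  · exact Or.inl ⟨j, by rw [← rename_subtypeVal_psum]; rfl⟩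
  · exact Or.inr ⟨j, by rw [← rename_subtypeVal_psum]; rfl⟩

theorem blockPsum_mem_adjoin_psum_translate {a : ι → K} {α β : K}
    (hα : ∀ i, p i → a i = α) (hβ : ∀ i, ¬p i → a i = β) (hαβ : α ≠ β) (k : ℕ) :
    blockPsum p k ∈
      adjoin K (range (psum ι K) ∪ range fun j => translate a (psum ι K j)) := by
  set S := adjoin K (range (psum ι K) ∪ range fun j => translate a (psum ι K j))
  have hpsum : ∀ j, psum ι K j ∈ S := fun j => subset_adjoin (Or.inl ⟨j, rfl⟩)
  induction k using Nat.strong_induction_on with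
  | _ k ih =>
    have hnot : ∀ j, blockPsum (fun i => ¬p i) j = psum ι K j - blockPsum p j := fun j => by
      rw [← blockPsum_add_blockPsum_not p j, add_sub_cancel_left]
    have key : (((k : K) + 1) * (α - β)) • blockPsum p k
        = translate a (psum ι K (k + 1)) - psum ι K (k + 1) - (((k : K) + 1) * β) • psum ι K k
          - ∑ j ∈ Finset.range k, ((k + 1).choose j * α ^ (k + 1 - j)) • blockPsum p j
          - ∑ j ∈ Finset.range k, ((k + 1).choose j * β ^ (k + 1 - j)) •
              (psum ι K j - blockPsum p j) := by
      rw [translate_psum p hα hβ, Finset.sum_range_succ, Finset.sum_range_succ,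
        Finset.sum_range_succ, Finset.sum_range_succ, hnot, hnot]
      simp only [Nat.choose_self, Nat.choose_succ_self_right, Nat.sub_self, pow_zero,
        Nat.add_sub_cancel_left, pow_one, Nat.cast_one, mul_one, Nat.cast_add, hnot]
      module
    have hk : ((k : K) + 1) * (α - β) ≠ 0 :=
      mul_ne_zero (Nat.cast_add_one_ne_zero k) (sub_ne_zero.mpr hαβ)
    rw [← inv_smul_smul₀ hk (blockPsum p k), key]
    have hlower : ∀ j ∈ Finset.range k, blockPsum p j ∈ S := fun j hj =>
      ih j (Finset.mem_range.mp hj)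
    refine Subalgebra.smul_mem _ (sub_mem (sub_mem (sub_mem (sub_mem ?_ (hpsum _))
      (Subalgebra.smul_mem _ (hpsum k) _)) (Subalgebra.sum_mem _ fun j hj => ?_))
      (Subalgebra.sum_mem _ fun j hj => ?_)) _
    · exact subset_adjoin (Or.inr ⟨k + 1, rfl⟩)
    · exact Subalgebra.smul_mem _ (hlower j hj) _
    · exact Subalgebra.smul_mem _ (sub_mem (hpsum j) (hlower j hj)) _

theorem mem_adjoin_psum_translate_of_invariant {a : ι → K} {α β : K}
    (hα : ∀ i, p i → a i = α) (hβ : ∀ i, ¬p i → a i = β) (hαβ : α ≠ β)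
    {P : MvPolynomial ι K} (hP : ∀ σ : Perm ι, (∀ i, p i ↔ p (σ i)) → rename σ P = P) :
    P ∈ adjoin K (range (psum ι K) ∪ range fun j => translate a (psum ι K j)) := by
  refine adjoin_le ?_ (mem_adjoin_blockPsum_of_invariant p hP)
  rintro _ (⟨k, rfl⟩ | ⟨k, rfl⟩)
  · exact blockPsum_mem_adjoin_psum_translate p hα hβ hαβ k
  · exact blockPsum_mem_adjoin_psum_translate (fun i => ¬p i) hβ
      (fun i hi => hα i (not_not.mp hi)) hαβ.symm k

end Blocks

end MvPolynomial

section PolynomialFunctions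

variable {ι M N : Type*} [AddCommGroup M] [Module ℝ M] [AddCommGroup N] [Module ℝ N]

noncomputable def polyFun (c : M →ₗ[ℝ] ι → ℝ) : MvPolynomial ι ℝ →ₐ[ℝ] (M → ℝ) :=
  AlgHom.pi fun m => aeval (c m)

theorem polyFun_apply (c : M →ₗ[ℝ] ι → ℝ) (P : MvPolynomial ι ℝ) (m : M) :
    polyFun c P m = eval (c m) P :=
  DFunLike.congr_fun (coe_aeval_eq_eval (c m)) P

theorem isPolyFun_polyFun (c : M →ₗ[ℝ] ι → ℝ) (P : MvPolynomial ι ℝ) :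
    IsPolyFun (polyFun c P) := by
  induction P using MvPolynomial.induction_on with
  | C r => exact (polyFun c).commutes r ▸ Subalgebra.algebraMap_mem _ r
  | add P Q hP hQ => exact (map_add (polyFun c) P Q) ▸ add_mem hP hQ
  | mul_X P i hP =>
    rw [map_mul]
    exact mul_mem hP
      (subset_adjoin ⟨LinearMap.proj i ∘ₗ c, funext fun m => by simp [polyFun_apply]⟩)

theorem IsPolyFun.comp_linearMap {f : M → ℝ} (hf : IsPolyFun f) (L : N →ₗ[ℝ] M) :
    IsPolyFun (f ∘ L) := by
  let precomp : (M → ℝ) →ₐ[ℝ] (N → ℝ) :=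
    AlgHom.pi fun y => Pi.evalAlgHom ℝ (fun _ => ℝ) (L y)
  refine adjoin_le ?_ (precomp.apply_mem_adjoin_image hf)
  rintro _ ⟨_, ⟨l, rfl⟩, rfl⟩
  exact subset_adjoin ⟨l ∘ₗ L, rfl⟩

theorem IsPolyFun.exists_eval_eq [Fintype ι] [DecidableEq ι] {f : (ι → ℝ) → ℝ}
    (hf : IsPolyFun f) :
    ∃ P : MvPolynomial ι ℝ, ∀ x, eval x P = f x := by
  suffices f ∈ (polyFun LinearMap.id).range by
    obtain ⟨P, hP⟩ := this
    exact ⟨P, fun x => by rw [← hP, AlgHom.toRingHom_eq_coe, RingHom.coe_coe, polyFun_apply]; rfl⟩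
  refine adjoin_le ?_ hf
  rintro _ ⟨l, rfl⟩
  refine ⟨∑ i, l (fun j => if i = j then 1 else 0) • X i, funext fun x => ?_⟩
  simp [polyFun_apply, l.pi_apply_eq_sum_univ x, mul_comm]

end PolynomialFunctions

namespace zeroSum

variable (n : ℕ)

noncomputable def coords : zeroSum n →ₗ[ℝ] Fin (n + 1) → ℝ :=
  (WithLp.linearEquiv 2 ℝ (Fin (n + 1) → ℝ)).toLinearMap ∘ₗ (zeroSum n).subtype

noncomputable def proj : (Fin (n + 1) → ℝ) →ₗ[ℝ] zeroSum n :=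
  LinearMap.codRestrict (zeroSum n)
    ((WithLp.linearEquiv 2 ℝ (Fin (n + 1) → ℝ)).symm.toLinearMap ∘ₗ
      (LinearMap.id - ((n : ℝ) + 1)⁻¹ • (LinearMap.pi fun _ => ∑ j, LinearMap.proj j)))
    fun x => by
      simp [zeroSum, coordSum,
        mul_inv_cancel_left₀ (Nat.cast_add_one_ne_zero n : (n : ℝ) + 1 ≠ 0)]

variable {n}

theorem proj_coords (v : zeroSum n) : proj n (coords n v) = v := by
  have hv : ∑ i, (v : EuclideanSpace ℝ (Fin (n + 1))) i = 0 := v.2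
  ext i
  simp [proj, coords, hv]

theorem proj_comp_perm (σ : Perm (Fin (n + 1))) (x : Fin (n + 1) → ℝ) :
    proj n (x ∘ σ) = permAct σ (proj n x) := by
  ext i
  simp [proj, permAct, Equiv.sum_comp σ x]

theorem polyFun_coords_permAct (P : MvPolynomial (Fin (n + 1)) ℝ) (σ : Perm (Fin (n + 1)))
    (v : zeroSum n) :
    polyFun (coords n) P (permAct σ v) = polyFun (coords n) (rename σ P) v := by
  rw [polyFun_apply, polyFun_apply, eval_rename]
  rfl

theorem polyFun_coords_translate (a : zeroSum n) (P : MvPolynomial (Fin (n + 1)) ℝ)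
    (v : zeroSum n) :
    polyFun (coords n) (translate (coords n a) P) v = polyFun (coords n) P (v + a) := by
  rw [polyFun_apply, polyFun_apply, eval_translate, map_add]

theorem _root_.IsPolyFun.exists_polyFun_coords_eq_of_invariant {f : zeroSum n → ℝ}
    (hf : IsPolyFun f) {G : Perm (Fin (n + 1)) → Prop}
    (hG : ∀ σ, G σ → ∀ v, f (permAct σ v) = f v) :
    ∃ P, polyFun (coords n) P = f ∧ ∀ σ, G σ → rename σ P = P := by
  obtain ⟨P, hP⟩ := (hf.comp_linearMap (proj n)).exists_eval_eq
  refine ⟨P, funext fun v => ?_, fun σ hσ => MvPolynomial.funext fun x => ?_⟩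
  · rw [polyFun_apply, hP, Function.comp_apply, proj_coords]
  · rw [eval_rename, hP, hP, Function.comp_apply, Function.comp_apply, proj_comp_perm, hG σ hσ]

end zeroSum

theorem An_stabilizer_invariants_generated_general
    (n r : ℕ) (s : ℕ) (hs : s = n + 1 - r)
    (a : zeroSum n)
    (ha : ∀ i : Fin (n + 1), (a : EuclideanSpace ℝ (Fin (n + 1))) i =
      if (i : ℕ) < r then (s : ℝ) / (n + 1) else -(r : ℝ) / (n + 1))
    (f : zeroSum n → ℝ) (hf : IsPolyFun f)
    (hinv : ∀ σ : Equiv.Perm (Fin (n + 1)),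
      (∀ i : Fin (n + 1), (i : ℕ) < r ↔ ((σ i : ℕ) < r)) →
      ∀ x : zeroSum n, f (permAct σ x) = f x) :
    f ∈ Algebra.adjoin ℝ
      ({g : zeroSum n → ℝ | IsPolyFun g ∧
          ∀ σ : Equiv.Perm (Fin (n + 1)), ∀ x : zeroSum n, g (permAct σ x) = g x} ∪
       {g : zeroSum n → ℝ | ∃ h : zeroSum n → ℝ,
          (IsPolyFun h ∧
            ∀ σ : Equiv.Perm (Fin (n + 1)), ∀ x : zeroSum n, h (permAct σ x) = h x) ∧
          g = fun v => h (v + a)}) := by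
  obtain ⟨P, rfl, hP⟩ := hf.exists_polyFun_coords_eq_of_invariant hinv
  have hαβ : (s : ℝ) / (n + 1) ≠ -(r : ℝ) / (n + 1) := by
    rw [Ne, div_left_inj' (Nat.cast_add_one_ne_zero n)]
    have : (0 : ℝ) < s + r := by exact_mod_cast (by omega : 0 < s + r)
    linarith
  have hPmem := mem_adjoin_psum_translate_of_invariant (fun i : Fin (n + 1) => (i : ℕ) < r)
    (fun i hi => (ha i).trans (if_pos hi)) (fun i hi => (ha i).trans (if_neg hi)) hαβ hP
  have hpsum : ∀ j, IsPolyFun (polyFun (zeroSum.coords n) (psum _ ℝ j)) ∧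
      ∀ σ v, polyFun (zeroSum.coords n) (psum _ ℝ j) (permAct σ v)
        = polyFun (zeroSum.coords n) (psum _ ℝ j) v := fun j =>
    ⟨isPolyFun_polyFun _ _, fun σ v => by
      rw [zeroSum.polyFun_coords_permAct, psum_isSymmetric _ _ j σ]⟩
  refine adjoin_mono ?_ ((polyFun (zeroSum.coords n)).apply_mem_adjoin_image hPmem)
  rintro _ ⟨Q, ⟨j, rfl⟩ | ⟨j, rfl⟩, rfl⟩
  · exact Or.inl (hpsum j)
  · exact Or.inr ⟨_, hpsum j, funext fun v => zeroSum.polyFun_coords_translate a _ v⟩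

theorem An_stabilizer_invariants_generated
    (n r : ℕ) (hr1 : 1 ≤ r) (hrn : r ≤ n) (s : ℕ) (hs : s = n + 1 - r)
    (a : zeroSum n)
    (ha : ∀ i : Fin (n + 1), (a : EuclideanSpace ℝ (Fin (n + 1))) i =
      if (i : ℕ) < r then (s : ℝ) / (n + 1) else -(r : ℝ) / (n + 1))
    (f : zeroSum n → ℝ) (hf : IsPolyFun f)
    (hinv : ∀ σ : Equiv.Perm (Fin (n + 1)),
      (∀ i : Fin (n + 1), (i : ℕ) < r ↔ ((σ i : ℕ) < r)) →
      ∀ x : zeroSum n, f (permAct σ x) = f x) :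
    f ∈ Algebra.adjoin ℝ
      ({g : zeroSum n → ℝ | IsPolyFun g ∧
          ∀ σ : Equiv.Perm (Fin (n + 1)), ∀ x : zeroSum n, g (permAct σ x) = g x} ∪
       {g : zeroSum n → ℝ | ∃ h : zeroSum n → ℝ,
          (IsPolyFun h ∧
            ∀ σ : Equiv.Perm (Fin (n + 1)), ∀ x : zeroSum n, h (permAct σ x) = h x) ∧
          g = fun v => h (v + a)}) :=
  An_stabilizer_invariants_generated_general n r s hs a ha f hf hinv
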